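/- For any building sequence a = (f_0, p_1, f_1, ..., p_h, f_h) ∈ S(n,A), the number of Motzkin paths mz of width n and area A whose building sequence a^(mz) equals a is exactly m(a) = C(f_h + p_h − 1, p_h − 1) · ∏_{i=1}^{h−1} [ C(p_{i+1} + f_i, f_i) · C(p_{i+1} + f_i + p_i − 1, p_i − 1) ] · C(p_1 + f_0, f_0), where C(·,·) denotes the binomial coefficient. -/

import Mathlib

/-- Moves of a Motzkin path: Up-right, Horizontal-right, Down-right. -/
inductive Move : Type
  | U : Move
  | H : Move
  | D : Move
deriving DecidableEq

open Move

/-- The vertical step of a move. -/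
def Move.step : Move → ℤ
  | U => 1
  | H => 0
  | D => -1

/-- The height of a path after its first `i` moves. -/
def heightAt (mz : List Move) (i : ℕ) : ℤ :=
  ((mz.take i).map Move.step).sum

/-- A word over {U,H,D} is a Motzkin path if it never goes below the x-axis
and ends on the x-axis. -/
def IsMotzkin (mz : List Move) : Prop :=
  (∀ i, 0 ≤ heightAt mz i) ∧ heightAt mz mz.length = 0

/-- The area between the x-axis and the path (sum of heights at integer points). -/
def area (mz : List Move) : ℤ :=
  ∑ i ∈ Finset.range (mz.length + 1), heightAt mz i

/-- `MZ n A` is the set of Motzkin paths of width `n` and area `A`. -/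
def MZ (n A : ℕ) : Set (List Move) :=
  {mz | mz.length = n ∧ IsMotzkin mz ∧ area mz = A}

/-- The weight `ω_i` of the `i`-th move (0-indexed): it is `h_i` for U and D moves
(height after the move for U, before the move for D) and `2h_i + 1` for H moves. -/
def moveWeight (mz : List Move) (i : ℕ) : ℤ :=
  match mz[i]? with
  | some U => heightAt mz (i + 1)
  | some D => heightAt mz i
  | some H => 2 * heightAt mz i + 1
  | none => 1

/-- The weight `ω(mz)` of a Motzkin path. -/
def weight (mz : List Move) : ℤ :=
  ∏ i ∈ Finset.range mz.length, moveWeight mz i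

/-- The total displacement `D(π) = Σ_i |i - π(i)|` of a permutation. -/
def totalDisp {n : ℕ} (π : Equiv.Perm (Fin n)) : ℤ :=
  ∑ i : Fin n, |((π i : ℕ) : ℤ) - ((i : ℕ) : ℤ)|

/-- The word over {U,H,D} associated to a permutation. -/
def toPath {n : ℕ} (π : Equiv.Perm (Fin n)) : List Move :=
  (List.finRange n).map fun i : Fin n =>
    if (i : ℕ) < (π i : ℕ) ∧ (i : ℕ) < (π.symm i : ℕ) then U
    else if (π i : ℕ) < (i : ℕ) ∧ (π.symm i : ℕ) < (i : ℕ) then D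
    else H

/-- The last fall length: the length of the maximal suffix consisting of D moves. -/
def lastFall (mz : List Move) : ℕ :=
  (mz.reverse.takeWhile (fun m => decide (m = D))).length

/-- The maximum height of a path. -/
def maxHeight (mz : List Move) : ℕ :=
  (Finset.range (mz.length + 1)).sup fun i => (heightAt mz i).toNat

/-- `flatsAt mz k` is the number of H moves of `mz` made at height `k`. -/
def flatsAt (mz : List Move) (k : ℕ) : ℕ :=
  ((Finset.range mz.length).filter fun j => mz[j]? = some H ∧ heightAt mz j = (k : ℤ)).card

/-- `peaksAt mz k` is the number of U moves of `mz` ending at height `k`. -/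
def peaksAt (mz : List Move) (k : ℕ) : ℕ :=
  ((Finset.range mz.length).filter fun j => mz[j]? = some U ∧ heightAt mz (j + 1) = (k : ℤ)).card

/-- `downsAt mz k` is the number of D moves of `mz` starting at height `k`. -/
def downsAt (mz : List Move) (k : ℕ) : ℕ :=
  ((Finset.range mz.length).filter fun j => mz[j]? = some D ∧ heightAt mz j = (k : ℤ)).card

/-- A candidate building sequence `(f_0, p_1, f_1, …, p_h, f_h)`, recorded as its
height `h` together with the flat counts `f` and peak counts `p`. -/
structure BSeq where
  h : ℕ
  f : ℕ → ℕ
  p : ℕ → ℕ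

/-- `Sset n A` is the set of building sequences for width `n` and area `A`:
all `p`-entries `p_1, …, p_h` are positive, entries beyond the height are zero, and the
width and area conditions hold. -/
def Sset (n A : ℕ) : Set BSeq :=
  {a | (∀ i, 1 ≤ i → i ≤ a.h → 0 < a.p i) ∧
       a.p 0 = 0 ∧
       (∀ i, a.h < i → a.p i = 0) ∧
       (∀ i, a.h < i → a.f i = 0) ∧
       (∑ i ∈ Finset.range (a.h + 1), a.f i) + 2 * (∑ i ∈ Finset.Icc 1 a.h, a.p i) = n ∧
       (∑ i ∈ Finset.range (a.h + 1), i * a.f i) +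
         (∑ i ∈ Finset.Icc 1 a.h, (2 * i - 1) * a.p i) = A}

/-- `mz` has building sequence `a`. -/
def hasBuildSeq (mz : List Move) (a : BSeq) : Prop :=
  maxHeight mz = a.h ∧ (∀ i, flatsAt mz i = a.f i) ∧ (∀ i, peaksAt mz i = a.p i)

/-- `perm(a) = ∏_{i=0}^h (2i+1)^{f_i} · ∏_{i=1}^h i^{2p_i}`. -/
def permWeight (a : BSeq) : ℕ :=
  (∏ i ∈ Finset.range (a.h + 1), (2 * i + 1) ^ a.f i) *
    ∏ i ∈ Finset.Icc 1 a.h, i ^ (2 * a.p i)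

/-- `m(a)`, the number of Motzkin paths with building sequence `a`. -/
def mcount (a : BSeq) : ℕ :=
  Nat.choose (a.f a.h + a.p a.h - 1) (a.p a.h - 1) *
    (∏ i ∈ Finset.Icc 1 (a.h - 1),
      Nat.choose (a.p (i + 1) + a.f i) (a.f i) *
        Nat.choose (a.p (i + 1) + a.f i + a.p i - 1) (a.p i - 1)) *
    Nat.choose (a.p 1 + a.f 0) (a.f 0)

/-- `M(n,A,l)`: the number of Motzkin paths of width `n`, area `A` and last fall length `l`
(for negative arguments there are no such paths, so the value is `0`; the value at
`(0,0,0)` is `1`, counting the empty path). -/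
noncomputable def Mcount (n A l : ℤ) : ℕ :=
  Nat.card {mz : List Move // (mz.length : ℤ) = n ∧ IsMotzkin mz ∧ area mz = A ∧
    (lastFall mz : ℤ) = l}

/-- `D(n,d,l)`: the sum of the weights of all Motzkin paths of width `n`, area `d` and
last fall length `l`. -/
noncomputable def Dw (n d l : ℤ) : ℤ :=
  ∑ᶠ mz ∈ {mz : List Move | (mz.length : ℤ) = n ∧ IsMotzkin mz ∧ area mz = d ∧
    (lastFall mz : ℤ) = l}, weight mz

/-- `M(n,A,h,p)`: the number of Motzkin paths of width `n`, area `A`, maximum height `h`,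
with exactly `p` U-moves ending at height `h` and no H-moves at height `h`. -/
noncomputable def Mtop (n A h p : ℤ) : ℕ :=
  Nat.card {mz : List Move // (mz.length : ℤ) = n ∧ IsMotzkin mz ∧ area mz = A ∧
    (maxHeight mz : ℤ) = h ∧ (peaksAt mz h.toNat : ℤ) = p ∧ flatsAt mz h.toNat = 0}

/-- `D(n,d,h,p)`: the sum of weights of Motzkin paths of width `n`, area `d`,
maximum height `h`, with exactly `p` U-moves ending at height `h` and no H-moves at height `h`. -/
noncomputable def Dtop (n d h p : ℤ) : ℤ :=
  ∑ᶠ mz ∈ {mz : List Move | (mz.length : ℤ) = n ∧ IsMotzkin mz ∧ area mz = d ∧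
    (maxHeight mz : ℤ) = h ∧ (peaksAt mz h.toNat : ℤ) = p ∧ flatsAt mz h.toNat = 0}, weight mz

/-- The area under the first `i` moves of a path (trapezoid rule; may be a half-integer). -/
def prefixArea (mz : List Move) (i : ℕ) : ℚ :=
  ∑ j ∈ Finset.range i, ((heightAt mz j : ℚ) + (heightAt mz (j + 1) : ℚ)) / 2


/-!
Give every move the level `max` of the heights of its two endpoints, so that an `H` at height `k`,
a `U` ending at height `k` and a `D` starting at height `k` all sit at level `k`. In a Motzkin path
the `U`s and `D`s at each level are equinumerous, so the flats and up-steps per level determine the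
width, the area and the maximal height.

Cutting a Motzkin path at its returns to the axis writes it uniquely as a word of flats `H` and
arches `U m D` with Motzkin bodies `m`. For a list of `q` Motzkin paths with `f i` flats at level
`i` and `p i` up-steps ending at level `i`, this gives a bijection with pairs made of the
level-zero words (`q` words with `f 0` flats and `p 1` arches in all) and the list of the `p 1`
bodies, whose profile is the shifted one. The words are counted by a weak composition of `f 0 + p 1` into `q`
parts together with the positions of the flats, i.e. by `C(p 1 + f 0, f 0) * C(p 1 + f 0 + q - 1,
q - 1)`; iterating level by level from `q = 1` gives `m(a)`.
-/

open Move Finset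

section Heights

@[simp] lemma heightAt_zero (l : List Move) : heightAt l 0 = 0 := rfl

@[simp] lemma heightAt_nil (i : ℕ) : heightAt [] i = 0 := by simp [heightAt]

lemma heightAt_cons_succ (x : Move) (l : List Move) (i : ℕ) :
    heightAt (x :: l) (i + 1) = x.step + heightAt l i := by
  simp [heightAt]

lemma heightAt_succ_of_getElem? {l : List Move} {j : ℕ} {x : Move} (h : l[j]? = some x) :
    heightAt l (j + 1) = heightAt l j + x.step := by
  simp [heightAt, List.take_add_one, h]

lemma heightAt_of_length_le {l : List Move} {i : ℕ} (h : l.length ≤ i) :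
    heightAt l i = heightAt l l.length := by
  simp [heightAt, List.take_of_length_le h]

lemma heightAt_append (l₁ l₂ : List Move) (i : ℕ) :
    heightAt (l₁ ++ l₂) i = heightAt l₁ i + heightAt l₂ (i - l₁.length) := by
  simp [heightAt, List.take_append]

lemma heightAt_take (l : List Move) (n i : ℕ) :
    heightAt (l.take n) i = heightAt l (min i n) := by
  rw [heightAt, heightAt, List.take_take]

lemma heightAt_drop (l : List Move) (n i : ℕ) :
    heightAt (l.drop n) i = heightAt l (n + i) - heightAt l n := by
  simp [heightAt, List.take_add]

lemma heightAt_le (l : List Move) (i : ℕ) : heightAt l i ≤ i := by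
  induction l generalizing i with
  | nil => simp
  | cons x l ih =>
    cases i with
    | zero => simp
    | succ i =>
      have := ih i
      rw [heightAt_cons_succ]
      cases x <;> simp [Move.step] <;> omega

end Heights

section LevelCounts

def moveLevel (l : List Move) (j : ℕ) : ℤ := max (heightAt l j) (heightAt l (j + 1))

def levelCount (x : Move) : List Move → ℤ → ℕ
  | [], _ => 0
  | y :: l, k => (if y = x ∧ k = max y.step 0 then 1 else 0) + levelCount x l (k - y.step)

lemma moveLevel_cons_succ (y : Move) (l : List Move) (j : ℕ) :
    moveLevel (y :: l) (j + 1) = y.step + moveLevel l j := by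
  simp only [moveLevel, heightAt_cons_succ, max_add_add_left]

lemma levelCount_eq_card (x : Move) (l : List Move) (k : ℤ) :
    levelCount x l k = #{j ∈ range l.length | l[j]? = some x ∧ moveLevel l j = k} := by
  induction l generalizing k with
  | nil => simp [levelCount]
  | cons y l ih =>
    rw [card_filter, List.length_cons, sum_range_succ', levelCount, ih, card_filter, add_comm]
    simp only [List.getElem?_cons_succ, moveLevel_cons_succ, List.getElem?_cons_zero,
      Option.some.injEq]
    congr 1
    · exact sum_congr rfl fun j _ => by simp only [eq_sub_iff_add_eq']
    · simp [moveLevel, heightAt_cons_succ, max_comm, eq_comm]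

lemma flatsAt_eq_levelCount (l : List Move) (k : ℕ) : flatsAt l k = levelCount H l k := by
  rw [levelCount_eq_card, flatsAt]
  refine congrArg card (filter_congr fun j _ => and_congr_right fun h => ?_)
  simp [moveLevel, heightAt_succ_of_getElem? h, Move.step]

lemma peaksAt_eq_levelCount (l : List Move) (k : ℕ) : peaksAt l k = levelCount U l k := by
  rw [levelCount_eq_card, peaksAt]
  refine congrArg card (filter_congr fun j _ => and_congr_right fun h => ?_)
  simp [moveLevel, heightAt_succ_of_getElem? h, Move.step]

lemma levelCount_append (x : Move) (l₁ l₂ : List Move) (k : ℤ) :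
    levelCount x (l₁ ++ l₂) k =
      levelCount x l₁ k + levelCount x l₂ (k - heightAt l₁ l₁.length) := by
  induction l₁ generalizing k with
  | nil => simp [levelCount]
  | cons y l ih =>
    simp only [List.cons_append, levelCount, ih, List.length_cons, heightAt_cons_succ,
      sub_add_eq_sub_sub, add_assoc]

/-- A `U` and a `D` at the same level cross the same unit edge, upwards and downwards. -/
lemma levelCount_U_sub_levelCount_D (l : List Move) (k : ℤ) :
    (levelCount U l k : ℤ) - levelCount D l k =
      (if k ≤ heightAt l l.length then 1 else 0) - (if k ≤ 0 then 1 else 0) := by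
  induction l generalizing k with
  | nil => by_cases hk : k ≤ 0 <;> simp [levelCount, hk]
  | cons y l ih =>
    have := ih (k - y.step)
    cases y <;> simp [levelCount, heightAt_cons_succ, Move.step] at this ⊢ <;>
      split_ifs at this ⊢ <;> omega

lemma IsMotzkin.levelCount_D {l : List Move} (hl : IsMotzkin l) (k : ℤ) :
    levelCount D l k = levelCount U l k := by
  have := levelCount_U_sub_levelCount_D l k
  rw [hl.2] at this
  omega

end LevelCounts

section Motzkin

lemma moveLevel_nonneg {l : List Move} (hl : ∀ i, 0 ≤ heightAt l i) (j : ℕ) :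
    0 ≤ moveLevel l j :=
  le_max_of_le_left (hl j)

lemma one_le_moveLevel_of_U {l : List Move} (hl : ∀ i, 0 ≤ heightAt l i) {j : ℕ}
    (hj : l[j]? = some U) : 1 ≤ moveLevel l j := by
  have := hl j
  have := heightAt_succ_of_getElem? hj
  simp only [moveLevel, Move.step] at *
  omega

lemma levelCount_eq_zero_of_neg {l : List Move} (hl : ∀ i, 0 ≤ heightAt l i) (x : Move)
    {k : ℤ} (hk : k < 0) : levelCount x l k = 0 := by
  rw [levelCount_eq_card, card_eq_zero, filter_eq_empty_iff]
  rintro j - ⟨-, rfl⟩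
  exact hk.not_ge (moveLevel_nonneg hl j)

lemma levelCount_U_zero {l : List Move} (hl : ∀ i, 0 ≤ heightAt l i) : levelCount U l 0 = 0 := by
  rw [levelCount_eq_card, card_eq_zero, filter_eq_empty_iff]
  rintro j - ⟨hj, h0⟩
  have := one_le_moveLevel_of_U hl hj
  omega

lemma isMotzkin_nil : IsMotzkin [] := ⟨fun i => by simp, by simp⟩

lemma IsMotzkin.append {l₁ l₂ : List Move} (h₁ : IsMotzkin l₁) (h₂ : IsMotzkin l₂) :
    IsMotzkin (l₁ ++ l₂) := by
  refine ⟨fun i => ?_, ?_⟩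
  · rw [heightAt_append]
    linarith [h₁.1 i, h₂.1 (i - l₁.length)]
  · rw [heightAt_append, heightAt_of_length_le (by simp), h₁.2, List.length_append,
      Nat.add_sub_cancel_left, h₂.2, add_zero]

lemma isMotzkin_cons_H_iff {l : List Move} : IsMotzkin (H :: l) ↔ IsMotzkin l := by
  have hh : ∀ i, heightAt (H :: l) (i + 1) = heightAt l i := fun i => by
    simp [heightAt_cons_succ, Move.step]
  refine ⟨fun h => ⟨fun i => hh i ▸ h.1 (i + 1), hh _ ▸ h.2⟩, fun h => ⟨fun i => ?_, hh _ ▸ h.2⟩⟩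
  cases i with
  | zero => simp
  | succ i => exact hh i ▸ h.1 i

lemma not_isMotzkin_D_cons (l : List Move) : ¬ IsMotzkin (D :: l) := fun h => by
  have := h.1 1
  simp [heightAt_cons_succ, Move.step] at this

lemma IsMotzkin.heightAt_append_D_cons {m : List Move} (hm : IsMotzkin m) (r : List Move) :
    heightAt (m ++ D :: r) (m.length + 1) = -1 := by
  simp [heightAt_append, heightAt_of_length_le, hm.2, heightAt_cons_succ, Move.step]

lemma IsMotzkin.arch {m r : List Move} (hm : IsMotzkin m) (hr : IsMotzkin r) :
    IsMotzkin (U :: m ++ D :: r) := by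
  have hD : IsMotzkin (U :: (m ++ [D])) := by
    refine ⟨fun i => ?_, ?_⟩
    · cases i with
      | zero => simp
      | succ i =>
        rw [heightAt_cons_succ, heightAt_append]
        have := hm.1 i
        rcases Nat.lt_or_ge m.length i with hi | hi
        · obtain ⟨j, rfl⟩ := Nat.exists_eq_add_of_lt hi
          rw [heightAt_of_length_le hi.le, hm.2, Nat.add_assoc, Nat.add_sub_cancel_left,
            heightAt_cons_succ]
          simp [Move.step]
        · simp [Nat.sub_eq_zero_of_le hi, Move.step]
          omega
    · have := hm.heightAt_append_D_cons []
      simp_all [heightAt_cons_succ, Move.step]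
  simpa using hD.append hr

lemma IsMotzkin.exists_eq_arch {t : List Move} (h : IsMotzkin (U :: t)) :
    ∃ m r, IsMotzkin m ∧ IsMotzkin r ∧ t = m ++ D :: r := by
  classical
  have ht : ∀ i, heightAt t i = heightAt (U :: t) (i + 1) - 1 := fun i => by
    simp [heightAt_cons_succ, Move.step]
  have hend : heightAt t t.length = -1 := by rw [ht, ← List.length_cons, h.2]; rfl
  have hret : ∃ j, heightAt t j = -1 := ⟨t.length, hend⟩
  set J := Nat.find hret
  have hJ : heightAt t J = -1 := Nat.find_spec hret
  have hbefore : ∀ j < J, 0 ≤ heightAt t j := fun j hj => by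
    have := Nat.find_min hret hj
    have := h.1 (j + 1)
    have := ht j
    omega
  have hJpos : 0 < J := Nat.pos_of_ne_zero fun h0 => by simp [h0] at hJ
  have hJlen : J - 1 < t.length := by
    have := Nat.find_min' hret hend
    omega
  have hstep := heightAt_succ_of_getElem? (List.getElem?_eq_getElem hJlen)
  rw [Nat.sub_add_cancel hJpos, hJ] at hstep
  have hprev := hbefore (J - 1) (by omega)
  have hDmove : t[J - 1] = D := by
    revert hstep; cases t[J - 1] <;> simp [Move.step] <;> omega
  refine ⟨t.take (J - 1), t.drop J, ⟨fun i => ?_, ?_⟩, ⟨fun i => ?_, ?_⟩, ?_⟩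
  · rw [heightAt_take]; exact hbefore _ (by omega)
  · rw [heightAt_take, List.length_take, min_eq_left hJlen.le, min_self]
    rw [hDmove] at hstep; simp only [Move.step] at hstep; omega
  · rw [heightAt_drop, hJ]; linarith [h.1 (J + i + 1), ht (J + i)]
  · rw [heightAt_drop, hJ, List.length_drop, Nat.add_sub_cancel' (by omega), hend, neg_sub_neg,
      sub_self]
  · conv_lhs => rw [← List.take_append_drop (J - 1) t]
    rw [List.drop_eq_getElem_cons hJlen, hDmove, Nat.sub_add_cancel hJpos]

lemma eq_of_append_D_cons_eq {m₁ m₂ r₁ r₂ : List Move} (h₁ : IsMotzkin m₁) (h₂ : IsMotzkin m₂)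
    (h : m₁ ++ D :: r₁ = m₂ ++ D :: r₂) : m₁ = m₂ ∧ r₁ = r₂ := by
  have key : ∀ {m₁ m₂ r₁ r₂ : List Move}, IsMotzkin m₁ → IsMotzkin m₂ →
      m₁ ++ D :: r₁ = m₂ ++ D :: r₂ → ¬ m₁.length < m₂.length := by
    intro m₁ m₂ r₁ r₂ h₁ h₂ h hlt
    have := h₁.heightAt_append_D_cons r₁
    rw [h, heightAt_append, Nat.sub_eq_zero_of_le hlt, heightAt_zero, add_zero] at this
    linarith [h₂.1 (m₁.length + 1)]
  have hlen : m₁.length = m₂.length :=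
    le_antisymm (not_lt.1 (key h₂ h₁ h.symm)) (not_lt.1 (key h₁ h₂ h))
  obtain ⟨hm, hr⟩ := List.append_inj h hlen
  exact ⟨hm, List.cons_injective hr⟩

end Motzkin

section Profile

variable {l : List Move}

lemma moveLevel_le_length {j : ℕ} (hj : j < l.length) : moveLevel l j ≤ l.length := by
  have := heightAt_le l j
  have := heightAt_le l (j + 1)
  simp only [moveLevel, max_le_iff]
  omega

lemma sum_filter_moveLevel (hl : ∀ i, 0 ≤ heightAt l i) {M : ℕ} (hM : l.length ≤ M) (x : Move)
    (g : ℤ → ℤ) :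
    ∑ j ∈ range l.length with l[j]? = some x, g (moveLevel l j) =
      ∑ k ∈ range (M + 1), g k * levelCount x l k := by
  have hlev : ∀ j ∈ range l.length, ((moveLevel l j).toNat : ℤ) = moveLevel l j := fun j _ =>
    Int.toNat_of_nonneg (moveLevel_nonneg hl j)
  have hmaps : ∀ j ∈ (range l.length).filter (fun j => l[j]? = some x),
      (moveLevel l j).toNat ∈ range (M + 1) :=
    fun j hj => by
      have := moveLevel_le_length (mem_range.1 (mem_filter.1 hj).1)
      have := hlev j (mem_filter.1 hj).1
      simp only [mem_range]
      omega
  calc ∑ j ∈ range l.length with l[j]? = some x, g (moveLevel l j)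
      = ∑ j ∈ range l.length with l[j]? = some x, g ((moveLevel l j).toNat : ℕ) :=
        sum_congr rfl fun j hj => by rw [hlev j (mem_filter.1 hj).1]
    _ = ∑ k ∈ range (M + 1), ∑ j ∈ range l.length with l[j]? = some x ∧ moveLevel l j = k,
          g k := by
        rw [← sum_fiberwise_of_maps_to' hmaps (fun k : ℕ => g k)]
        refine sum_congr rfl fun k _ => ?_
        rw [filter_filter]
        refine sum_congr (filter_congr fun j hj => and_congr_right fun _ => ?_) fun _ _ => rfl
        rw [← hlev j hj]
        omega
    _ = _ := sum_congr rfl fun k _ => by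
        rw [sum_const, levelCount_eq_card, nsmul_eq_mul, mul_comm]

lemma sum_range_length_eq_sum_levelCount (hl : ∀ i, 0 ≤ heightAt l i) {M : ℕ}
    (hM : l.length ≤ M) (F : ℕ → ℤ) (g : Move → ℤ → ℤ)
    (hF : ∀ j x, l[j]? = some x → F j = g x (moveLevel l j)) :
    ∑ j ∈ range l.length, F j = ∑ k ∈ range (M + 1),
      (g U k * levelCount U l k + g H k * levelCount H l k + g D k * levelCount D l k) := by
  have hsplit : ∀ j ∈ range l.length, F j =
      (if l[j]? = some U then g U (moveLevel l j) else 0) +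
      (if l[j]? = some H then g H (moveLevel l j) else 0) +
      (if l[j]? = some D then g D (moveLevel l j) else 0) := fun j hj => by
    obtain ⟨y, hy⟩ : ∃ y, l[j]? = some y := ⟨_, List.getElem?_eq_getElem (mem_range.1 hj)⟩
    rw [hF j _ hy, hy]
    cases y <;> simp
  simp only [sum_congr rfl hsplit, sum_add_distrib, ← sum_filter, sum_filter_moveLevel hl hM]

lemma sum_range_eq_sum_Icc_of_vanish {h M : ℕ} (hhM : h ≤ M) {G : ℕ → ℤ} (h0 : G 0 = 0)
    (hG : ∀ k, h < k → G k = 0) : ∑ k ∈ range (M + 1), G k = ∑ k ∈ Icc 1 h, G k := by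
  refine (sum_subset (fun k hk => ?_) fun k _ hk => ?_).symm
  · simp only [mem_Icc, mem_range] at hk ⊢; omega
  · rcases Nat.eq_zero_or_pos k with rfl | hk0
    · exact h0
    · exact hG k (by simp only [mem_Icc, not_and_or, not_le] at hk; omega)

lemma sum_range_eq_sum_range_of_vanish {h M : ℕ} (hhM : h ≤ M) {G : ℕ → ℤ}
    (hG : ∀ k, h < k → G k = 0) : ∑ k ∈ range (M + 1), G k = ∑ k ∈ range (h + 1), G k :=
  (sum_subset (range_subset_range.2 (by omega)) fun k _ hk =>
    hG k (by simp only [mem_range, not_lt] at hk; omega)).symm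

variable {h : ℕ} {f p : ℕ → ℕ}

lemma IsMotzkin.length_eq (hl : IsMotzkin l) (hf : ∀ k : ℕ, levelCount H l k = f k)
    (hp : ∀ k : ℕ, levelCount U l k = p k) (hfh : ∀ k, h < k → f k = 0)
    (hph : ∀ k, h < k → p k = 0) :
    l.length = ∑ i ∈ range (h + 1), f i + 2 * ∑ i ∈ Icc 1 h, p i := by
  have hp0 : p 0 = 0 := by rw [← hp 0]; exact levelCount_U_zero hl.1
  have := sum_range_length_eq_sum_levelCount hl.1 (le_max_left _ h) (fun _ => 1) (fun _ _ => 1)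
    (by simp)
  simp only [hl.levelCount_D, sum_const, card_range, nsmul_eq_mul, mul_one, one_mul] at this
  zify
  rw [this]
  simp only [hf, hp, sum_add_distrib]
  rw [sum_range_eq_sum_Icc_of_vanish (le_max_right _ _) (by simp [hp0])
      (fun k hk => by simp [hph k hk]),
    sum_range_eq_sum_range_of_vanish (le_max_right _ _) (fun k hk => by simp [hfh k hk])]
  ring

lemma IsMotzkin.area_eq (hl : IsMotzkin l) (hf : ∀ k : ℕ, levelCount H l k = f k)
    (hp : ∀ k : ℕ, levelCount U l k = p k) (hfh : ∀ k, h < k → f k = 0)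
    (hph : ∀ k, h < k → p k = 0) :
    area l = ((∑ i ∈ range (h + 1), i * f i + ∑ i ∈ Icc 1 h, (2 * i - 1) * p i : ℕ) : ℤ) := by
  have hp0 : p 0 = 0 := by rw [← hp 0]; exact levelCount_U_zero hl.1
  have hmove : ∀ j x, l[j]? = some x →
      heightAt l (j + 1) = if x = D then moveLevel l j - 1 else moveLevel l j := by
    intro j x hx
    have := heightAt_succ_of_getElem? hx
    cases x <;> simp only [moveLevel, Move.step] at this ⊢ <;> simp <;> omega
  have := sum_range_length_eq_sum_levelCount hl.1 (le_max_left _ h) (fun j => heightAt l (j + 1))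
    (fun x k => if x = D then k - 1 else k) hmove
  rw [area, sum_range_succ', heightAt_zero, add_zero, this]
  simp only [hl.levelCount_D, hf, hp, reduceCtorEq, if_false, if_true]
  have hterm : ∀ k : ℕ, (k : ℤ) * p k + k * f k + (k - 1) * p k = k * f k + (2 * k - 1) * p k :=
    fun k => by ring
  simp only [hterm, sum_add_distrib]
  rw [sum_range_eq_sum_Icc_of_vanish (G := fun k => (2 * (k : ℤ) - 1) * p k) (le_max_right _ _)
      (by simp [hp0]) (fun k hk => by simp [hph k hk]),
    sum_range_eq_sum_range_of_vanish (le_max_right _ _) (fun k hk => by simp [hfh k hk])]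
  push_cast
  congr 1
  refine sum_congr rfl fun i hi => ?_
  rw [Nat.cast_sub (by simp only [mem_Icc] at hi; omega)]
  push_cast
  ring

end Profile

section MaxHeight

variable {l : List Move}

lemma heightAt_le_maxHeight {i : ℕ} (hi : i ≤ l.length) : heightAt l i ≤ maxHeight l :=
  (Int.self_le_toNat _).trans <| by
    exact_mod_cast le_sup (f := fun i => (heightAt l i).toNat) (mem_range.2 (Nat.lt_succ_of_le hi))

lemma maxHeight_le {h : ℕ} (hlev : ∀ j < l.length, moveLevel l j ≤ h) : maxHeight l ≤ h :=
  Finset.sup_le fun i hi => by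
    cases i with
    | zero => simp
    | succ j =>
      have := hlev j (by simp only [mem_range] at hi; omega)
      simp only [moveLevel, max_le_iff] at this
      omega

lemma moveLevel_le_of_levelCount_eq_zero (hl : ∀ i, 0 ≤ heightAt l i) {h : ℕ}
    (hvan : ∀ x (k : ℕ), h < k → levelCount x l k = 0) {j : ℕ} (hj : j < l.length) :
    moveLevel l j ≤ h := by
  by_contra hlt
  have hk : ((moveLevel l j).toNat : ℤ) = moveLevel l j :=
    Int.toNat_of_nonneg (moveLevel_nonneg hl j)
  have hpos : 0 < levelCount l[j] l (moveLevel l j).toNat := by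
    rw [levelCount_eq_card, hk]
    exact card_pos.2 ⟨j, mem_filter.2 ⟨mem_range.2 hj, List.getElem?_eq_getElem hj, rfl⟩⟩
  rw [hvan _ _ (by omega)] at hpos
  exact hpos.false

lemma le_maxHeight_of_levelCount_U_pos {k : ℕ} (hk : 0 < levelCount U l k) : k ≤ maxHeight l := by
  obtain ⟨j, hj⟩ := card_pos.1 (levelCount_eq_card U l k ▸ hk)
  simp only [mem_filter, mem_range] at hj
  obtain ⟨hjl, hU, hlev⟩ := hj
  have := heightAt_le_maxHeight (l := l) (show j + 1 ≤ l.length by omega)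
  have := heightAt_succ_of_getElem? hU
  simp only [moveLevel, Move.step] at hlev this
  omega

lemma IsMotzkin.maxHeight_eq {h : ℕ} {f p : ℕ → ℕ} (hl : IsMotzkin l)
    (hf : ∀ k : ℕ, levelCount H l k = f k) (hp : ∀ k : ℕ, levelCount U l k = p k)
    (hfh : ∀ k, h < k → f k = 0) (hph : ∀ k, h < k → p k = 0) (hpos : 0 < h → 0 < p h) :
    maxHeight l = h := by
  refine le_antisymm (maxHeight_le fun j hj => moveLevel_le_of_levelCount_eq_zero hl.1 ?_ hj) ?_
  · intro x k hk
    cases x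
    · rw [hp, hph k hk]
    · rw [hf, hfh k hk]
    · rw [hl.levelCount_D, hp, hph k hk]
  · rcases Nat.eq_zero_or_pos h with rfl | h0
    · exact Nat.zero_le _
    · exact le_maxHeight_of_levelCount_U_pos (by rw [hp]; exact hpos h0)

end MaxHeight

lemma mem_sset_iff {n A : ℕ} {a : BSeq} (ha : a ∈ Sset n A) (l : List Move) :
    (l.length = n ∧ IsMotzkin l ∧ area l = A ∧ hasBuildSeq l a) ↔
      IsMotzkin l ∧ (∀ k : ℕ, levelCount H l k = a.f k) ∧ ∀ k : ℕ, levelCount U l k = a.p k := by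
  obtain ⟨hpos, -, hph, hfh, hwidth, harea⟩ := ha
  simp only [hasBuildSeq, flatsAt_eq_levelCount, peaksAt_eq_levelCount]
  refine ⟨fun ⟨_, hl, _, _, hf, hp⟩ => ⟨hl, hf, hp⟩, fun ⟨hl, hf, hp⟩ => ⟨?_, hl, ?_, ?_, hf, hp⟩⟩
  · rw [hl.length_eq hf hp hfh hph, hwidth]
  · rw [hl.area_eq hf hp hfh hph, harea]
  · exact hl.maxHeight_eq hf hp hfh hph fun h0 => hpos _ h0 le_rfl

section Assemble

def pooledCount (x : Move) (vs : List (List Move)) (k : ℤ) : ℕ := (vs.map (levelCount x · k)).sum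

lemma pooledCount_eq_zero_of_neg {vs : List (List Move)} (hvs : ∀ v ∈ vs, IsMotzkin v) (x : Move)
    {k : ℤ} (hk : k < 0) : pooledCount x vs k = 0 :=
  List.sum_eq_zero fun n hn => by
    obtain ⟨v, hv, rfl⟩ := List.mem_map.1 hn
    exact levelCount_eq_zero_of_neg (hvs v hv).1 x hk

lemma pooledCount_U_zero {vs : List (List Move)} (hvs : ∀ v ∈ vs, IsMotzkin v) :
    pooledCount U vs 0 = 0 :=
  List.sum_eq_zero fun n hn => by
    obtain ⟨v, hv, rfl⟩ := List.mem_map.1 hn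
    exact levelCount_U_zero (hvs v hv).1


/-- The Motzkin path whose level-zero moves are read off `s` (`false` for a flat `H`, `true` for
an arch `U … D`), the arches being filled in order with the paths of `ms`. -/
def assemble : List Bool → List (List Move) → List Move
  | [], _ => []
  | false :: s, ms => H :: assemble s ms
  | true :: s, ms => U :: ms.headD [] ++ D :: assemble s ms.tail

lemma isMotzkin_assemble (s : List Bool) {ms : List (List Move)} (hms : ∀ m ∈ ms, IsMotzkin m) :
    IsMotzkin (assemble s ms) := by
  induction s generalizing ms with
  | nil => exact isMotzkin_nil
  | cons b s ih =>
    cases b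
    · exact isMotzkin_cons_H_iff.2 (ih hms)
    · cases ms with
      | nil => exact isMotzkin_nil.arch (ih hms)
      | cons m ms =>
        exact (hms m (by simp)).arch (ih fun m' hm' => hms m' (List.mem_cons_of_mem _ hm'))

lemma levelCount_arch (x : Move) {m : List Move} (hm : IsMotzkin m) (r : List Move) (k : ℤ) :
    levelCount x (U :: m ++ D :: r) k =
      (if x ≠ H ∧ k = 1 then 1 else 0) + levelCount x m (k - 1) + levelCount x r k := by
  have hU : heightAt (U :: m) (U :: m).length = 1 := by
    simp [heightAt_cons_succ, hm.2, Move.step]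
  rw [levelCount_append, hU]
  cases x <;> by_cases hk : k = 1 <;> simp [levelCount, Move.step, hk] <;> omega

def levelZeroCount (x : Move) (s : List Bool) (k : ℤ) : ℕ :=
  if x = H then (if k = 0 then s.count false else 0) else (if k = 1 then s.count true else 0)

lemma levelCount_assemble (x : Move) (s : List Bool) {ms : List (List Move)}
    (hlen : ms.length = s.count true) (hms : ∀ m ∈ ms, IsMotzkin m) (k : ℤ) :
    levelCount x (assemble s ms) k =
      levelZeroCount x s k + pooledCount x ms (k - 1) := by
  induction s generalizing ms k with
  | nil =>
    rw [List.count_nil, List.length_eq_zero_iff] at hlen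
    subst hlen
    simp [assemble, levelCount, levelZeroCount, pooledCount]
  | cons b s ih =>
    cases b
    · rw [List.count_cons_of_ne (by decide)] at hlen
      simp only [assemble, levelCount, ih hlen hms, levelZeroCount]
      cases x <;> by_cases hk : k = 0 <;> simp [hk, Move.step]; ring
    · rw [List.count_cons_self] at hlen
      obtain ⟨m, ms, rfl⟩ := List.exists_cons_of_length_pos (show 0 < ms.length by omega)
      have hm := hms m (by simp)
      simp only [List.length_cons, Nat.add_right_cancel_iff] at hlen
      simp only [assemble, List.headD_cons, List.tail_cons, levelCount_arch x hm,
        ih hlen fun m' hm' => hms m' (by simp [hm']), levelZeroCount, pooledCount, List.map_cons,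
        List.sum_cons]
      cases x <;> by_cases hk : k = 1 <;> simp [hk] <;> omega

lemma assemble_injective {s₁ s₂ : List Bool} {ms₁ ms₂ : List (List Move)}
    (hlen₁ : ms₁.length = s₁.count true) (hlen₂ : ms₂.length = s₂.count true)
    (hms₁ : ∀ m ∈ ms₁, IsMotzkin m) (hms₂ : ∀ m ∈ ms₂, IsMotzkin m)
    (h : assemble s₁ ms₁ = assemble s₂ ms₂) : s₁ = s₂ ∧ ms₁ = ms₂ := by
  induction s₁ generalizing s₂ ms₁ ms₂ with
  | nil =>
    cases s₂ with
    | nil => simp_all [List.length_eq_zero_iff]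
    | cons b s₂ => cases b <;> simp [assemble] at h
  | cons b₁ s₁ ih =>
    cases s₂ with
    | nil => cases b₁ <;> simp [assemble] at h
    | cons b₂ s₂ =>
      cases b₁ <;> cases b₂ <;> simp only [assemble, List.cons_append, List.cons.injEq,
        reduceCtorEq, false_and, true_and] at h
      · simp only [List.count_cons_of_ne (show false ≠ true by decide)] at hlen₁ hlen₂
        exact (ih hlen₁ hlen₂ hms₁ hms₂ h).imp (congrArg _) id
      · rw [List.count_cons_self] at hlen₁ hlen₂
        obtain ⟨m₁, ms₁, rfl⟩ := List.exists_cons_of_length_pos (show 0 < ms₁.length by omega)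
        obtain ⟨m₂, ms₂, rfl⟩ := List.exists_cons_of_length_pos (show 0 < ms₂.length by omega)
        simp only [List.headD_cons, List.tail_cons] at h
        obtain ⟨rfl, hrest⟩ := eq_of_append_D_cons_eq (hms₁ m₁ (by simp)) (hms₂ m₂ (by simp)) h
        simp only [List.length_cons, Nat.add_right_cancel_iff] at hlen₁ hlen₂
        obtain ⟨rfl, rfl⟩ := ih hlen₁ hlen₂ (fun m hm => hms₁ m (by simp [hm]))
          (fun m hm => hms₂ m (by simp [hm])) hrest
        exact ⟨rfl, rfl⟩

lemma IsMotzkin.exists_assemble {l : List Move} (hl : IsMotzkin l) :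
    ∃ s ms, ms.length = s.count true ∧ (∀ m ∈ ms, IsMotzkin m) ∧ assemble s ms = l := by
  induction hn : l.length using Nat.strong_induction_on generalizing l with
  | _ n ih =>
    match l, hl with
    | [], _ => exact ⟨[], [], rfl, by simp, rfl⟩
    | D :: t, hl => exact absurd hl (not_isMotzkin_D_cons t)
    | H :: t, hl =>
      obtain ⟨s, ms, hlen, hms, rfl⟩ := ih t.length (by simp [← hn]) (isMotzkin_cons_H_iff.1 hl) rfl
      exact ⟨false :: s, ms, by simpa using hlen, hms, rfl⟩
    | U :: t, hl =>
      obtain ⟨m, r, hm, hr, rfl⟩ := hl.exists_eq_arch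
      obtain ⟨s, ms, hlen, hms, rfl⟩ := ih _ (by simp [← hn]; omega) hr rfl
      refine ⟨true :: s, m :: ms, by simpa using hlen, ?_, rfl⟩
      simpa [hm] using hms

end Assemble

section Forests

def assembleForest : List (List Bool) → List (List Move) → List (List Move)
  | [], _ => []
  | s :: ss, ms =>
    assemble s (ms.take (s.count true)) :: assembleForest ss (ms.drop (s.count true))

variable {ss : List (List Bool)} {ms : List (List Move)}

lemma length_assembleForest (ss : List (List Bool)) (ms : List (List Move)) :
    (assembleForest ss ms).length = ss.length := by
  induction ss generalizing ms <;> simp [assembleForest, *]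

lemma isMotzkin_of_mem_assembleForest (hms : ∀ m ∈ ms, IsMotzkin m) :
    ∀ v ∈ assembleForest ss ms, IsMotzkin v := by
  induction ss generalizing ms with
  | nil => simp [assembleForest]
  | cons s ss ih =>
    simp only [assembleForest, List.mem_cons, forall_eq_or_imp]
    exact ⟨isMotzkin_assemble s fun m hm => hms m (List.mem_of_mem_take hm),
      ih fun m hm => hms m (List.mem_of_mem_drop hm)⟩

lemma pooledCount_assembleForest (x : Move) (hlen : ms.length = ss.flatten.count true)
    (hms : ∀ m ∈ ms, IsMotzkin m) (k : ℤ) :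
    pooledCount x (assembleForest ss ms) k =
      levelZeroCount x ss.flatten k + pooledCount x ms (k - 1) := by
  induction ss generalizing ms with
  | nil =>
    rw [List.flatten_nil, List.count_nil, List.length_eq_zero_iff] at hlen
    subst hlen
    simp [assembleForest, pooledCount, levelZeroCount]
  | cons s ss ih =>
    rw [List.flatten_cons, List.count_append] at hlen
    have htake : (ms.take (s.count true)).length = s.count true := by simp; omega
    have hdrop : (ms.drop (s.count true)).length = ss.flatten.count true := by simp; omega
    have ih' := ih hdrop fun m hm => hms m (List.mem_of_mem_drop hm)
    have hfirst := levelCount_assemble x s htake (fun m hm => hms m (List.mem_of_mem_take hm)) k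
    simp only [pooledCount] at ih' hfirst ⊢
    rw [assembleForest, List.map_cons, List.sum_cons, hfirst, ih']
    conv_rhs => rw [← List.take_append_drop (s.count true) ms]
    simp only [levelZeroCount, List.flatten_cons, List.count_append, List.map_append,
      List.sum_append]
    split_ifs <;> ring

lemma assembleForest_injective {ss₁ ss₂ : List (List Bool)} {ms₁ ms₂ : List (List Move)}
    (hlen₁ : ms₁.length = ss₁.flatten.count true) (hlen₂ : ms₂.length = ss₂.flatten.count true)
    (hms₁ : ∀ m ∈ ms₁, IsMotzkin m) (hms₂ : ∀ m ∈ ms₂, IsMotzkin m)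
    (h : assembleForest ss₁ ms₁ = assembleForest ss₂ ms₂) : ss₁ = ss₂ ∧ ms₁ = ms₂ := by
  induction ss₁ generalizing ss₂ ms₁ ms₂ with
  | nil =>
    cases ss₂ with
    | nil => simp_all [List.length_eq_zero_iff]
    | cons s ss₂ => simp [assembleForest] at h
  | cons s₁ ss₁ ih =>
    cases ss₂ with
    | nil => simp [assembleForest] at h
    | cons s₂ ss₂ =>
      simp only [List.flatten_cons, List.count_append] at hlen₁ hlen₂
      simp only [assembleForest, List.cons.injEq] at h
      obtain ⟨rfl, htake⟩ := assemble_injective (by simp; omega) (by simp; omega)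
        (fun m hm => hms₁ m (List.mem_of_mem_take hm))
        (fun m hm => hms₂ m (List.mem_of_mem_take hm)) h.1
      obtain ⟨rfl, hdrop⟩ := ih (by simp; omega) (by simp; omega)
        (fun m hm => hms₁ m (List.mem_of_mem_drop hm))
        (fun m hm => hms₂ m (List.mem_of_mem_drop hm)) h.2
      refine ⟨rfl, ?_⟩
      rw [← List.take_append_drop (s₁.count true) ms₁, htake, hdrop, List.take_append_drop]

lemma exists_assembleForest {vs : List (List Move)} (hvs : ∀ v ∈ vs, IsMotzkin v) :
    ∃ ss ms, ms.length = ss.flatten.count true ∧ (∀ m ∈ ms, IsMotzkin m) ∧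
      assembleForest ss ms = vs := by
  induction vs with
  | nil => exact ⟨[], [], rfl, by simp, rfl⟩
  | cons v vs ih =>
    obtain ⟨ss, ms, hlen, hms, rfl⟩ := ih fun w hw => hvs w (by simp [hw])
    obtain ⟨s, ms₀, hlen₀, hms₀, rfl⟩ := (hvs v (by simp)).exists_assemble
    refine ⟨s :: ss, ms₀ ++ ms, by simp [hlen, hlen₀], ?_, ?_⟩
    · exact fun m hm => (List.mem_append.1 hm).elim (hms₀ m) (hms m)
    · simp [assembleForest, ← hlen₀]

end Forests

section Layers

/-- `p 0` is the number of paths, as if each of them hung from an up-step ending at level `0`. -/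
def Forest (f p : ℕ → ℕ) : Set (List (List Move)) :=
  {vs | vs.length = p 0 ∧ (∀ v ∈ vs, IsMotzkin v) ∧ (∀ k : ℕ, pooledCount H vs k = f k) ∧
    ∀ k : ℕ, pooledCount U vs (k + 1) = p (k + 1)}

def Shapes (q a b : ℕ) : Set (List (List Bool)) :=
  {ss | ss.length = q ∧ ss.flatten.count false = a ∧ ss.flatten.count true = b}

variable {f p : ℕ → ℕ}

lemma assembleForest_mem_forest_iff {ss : List (List Bool)} {ms : List (List Move)}
    (hlen : ms.length = ss.flatten.count true) (hms : ∀ m ∈ ms, IsMotzkin m) :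
    assembleForest ss ms ∈ Forest f p ↔
      ss ∈ Shapes (p 0) (f 0) (p 1) ∧ ms ∈ Forest (fun k => f (k + 1)) (fun k => p (k + 1)) := by
  have hH : ∀ k : ℕ, pooledCount H (assembleForest ss ms) k =
      if k = 0 then ss.flatten.count false else pooledCount H ms (k - 1 : ℕ) := fun k => by
    rw [pooledCount_assembleForest H hlen hms, levelZeroCount]
    rcases k with _ | k
    · simp [pooledCount_eq_zero_of_neg hms]
    · simp
      omega
  have hU : ∀ k : ℕ, pooledCount U (assembleForest ss ms) (k + 1) =
      if k = 0 then ss.flatten.count true else pooledCount U ms k := fun k => by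
    rw [pooledCount_assembleForest U hlen hms, levelZeroCount]
    rcases k with _ | k
    · simp [pooledCount_U_zero hms]
    · simp
      omega
  simp only [Forest, Shapes, Set.mem_ofPred_eq, length_assembleForest, hH, hU, hlen]
  constructor
  · rintro ⟨hq, -, hf, hp⟩
    refine ⟨⟨hq, by simpa using hf 0, by simpa using hp 0⟩, by simpa using hp 0, hms,
      fun k => by simpa using hf (k + 1), fun k => by simpa using hp (k + 1)⟩
  · rintro ⟨⟨hq, hf0, hp1⟩, -, -, hf, hp⟩
    refine ⟨hq, isMotzkin_of_mem_assembleForest hms, fun k => ?_, fun k => ?_⟩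
    · rcases k with _ | k <;> simp [hf0, hf]
    · rcases k with _ | k <;> simp [hp1, hp]

lemma image_assembleForest (f p : ℕ → ℕ) :
    (fun x => assembleForest x.1 x.2) ''
        (Shapes (p 0) (f 0) (p 1) ×ˢ Forest (fun k => f (k + 1)) (fun k => p (k + 1))) =
      Forest f p := by
  ext vs
  constructor
  · rintro ⟨⟨ss, ms⟩, ⟨hss, hms⟩, rfl⟩
    exact (assembleForest_mem_forest_iff (hms.1.trans hss.2.2.symm) hms.2.1).2 ⟨hss, hms⟩
  · intro hvs
    obtain ⟨ss, ms, hlen, hms, rfl⟩ := exists_assembleForest hvs.2.1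
    exact ⟨(ss, ms), (assembleForest_mem_forest_iff hlen hms).1 hvs, rfl⟩

lemma injOn_assembleForest (f p : ℕ → ℕ) :
    Set.InjOn (fun x => assembleForest x.1 x.2)
      (Shapes (p 0) (f 0) (p 1) ×ˢ Forest (fun k => f (k + 1)) (fun k => p (k + 1))) := by
  rintro ⟨ss₁, ms₁⟩ ⟨hss₁, hms₁⟩ ⟨ss₂, ms₂⟩ ⟨hss₂, hms₂⟩ h
  obtain ⟨rfl, rfl⟩ := assembleForest_injective (hms₁.1.trans hss₁.2.2.symm)
    (hms₂.1.trans hss₂.2.2.symm) hms₁.2.1 hms₂.2.1 h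
  rfl

lemma ncard_forest_eq_mul (f p : ℕ → ℕ) :
    (Forest f p).ncard = (Shapes (p 0) (f 0) (p 1)).ncard *
      (Forest (fun k => f (k + 1)) (fun k => p (k + 1))).ncard := by
  rw [← image_assembleForest, (injOn_assembleForest f p).ncard_image, Set.ncard_prod]

end Layers

section Counting

def boolWords (n b : ℕ) : Set (List Bool) := {w | w.length = n ∧ w.count true = b}

def weakCompositions (q m : ℕ) : Set (List ℕ) := {l | l.length = q ∧ l.sum = m}

lemma finite_boolWords (n b : ℕ) : (boolWords n b).Finite :=
  (List.finite_length_eq Bool n).subset fun _ hw => hw.1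

lemma ncard_boolWords (n b : ℕ) : (boolWords n b).ncard = n.choose b := by
  induction n generalizing b with
  | zero =>
    have hnil : ∀ w : List Bool, w ∈ boolWords 0 b ↔ w = [] ∧ b = 0 := fun w => by
      simp only [boolWords, Set.mem_ofPred_eq, List.length_eq_zero_iff]
      constructor <;> rintro ⟨rfl, rfl⟩ <;> simp
    rcases b with _ | b
    · rw [show boolWords 0 0 = {[]} by ext; simp [hnil], Set.ncard_singleton, Nat.choose_self]
    · rw [show boolWords 0 (b + 1) = ∅ by ext; simp [hnil], Set.ncard_empty, Nat.choose_zero_succ]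
  | succ n ih =>
    have hinj : ∀ x : Bool, Function.Injective (List.cons x) := fun _ => List.cons_injective
    rcases b with _ | b
    · have : boolWords (n + 1) 0 = List.cons false '' boolWords n 0 := by
        ext w; rcases w with _ | ⟨_ | _, w⟩ <;> simp [boolWords]
      rw [this, (hinj false).injOn.ncard_image, ih, Nat.choose_zero_right, Nat.choose_zero_right]
    · have : boolWords (n + 1) (b + 1) =
          List.cons false '' boolWords n (b + 1) ∪ List.cons true '' boolWords n b := by
        ext w; rcases w with _ | ⟨_ | _, w⟩ <;> simp [boolWords]
      rw [this, Set.ncard_union_eq ?_ ((finite_boolWords _ _).image _)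
        ((finite_boolWords _ _).image _), (hinj false).injOn.ncard_image,
        (hinj true).injOn.ncard_image, ih, ih, Nat.choose_succ_succ', add_comm]
      exact Set.disjoint_left.2 fun _ ⟨_, _, h₁⟩ ⟨_, _, h₂⟩ => by simp [← h₁] at h₂

lemma finite_weakCompositions (q m : ℕ) : (weakCompositions q m).Finite := by
  induction q generalizing m with
  | zero => exact (Set.finite_singleton []).subset fun l hl => List.length_eq_zero_iff.1 hl.1
  | succ q ih =>
    refine ((Set.finite_Iic m).biUnion fun x _ => (ih (m - x)).image (List.cons x)).subset ?_
    rintro (_ | ⟨x, l⟩) ⟨hlen, hsum⟩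
    · simp at hlen
    · simp only [List.length_cons, List.sum_cons, Nat.add_right_cancel_iff] at hlen hsum
      exact Set.mem_biUnion (x := x) (by simp; omega) ⟨l, ⟨hlen, by omega⟩, rfl⟩

lemma weakCompositions_add_two_succ (q m : ℕ) :
    weakCompositions (q + 2) (m + 1) = List.cons 0 '' weakCompositions (q + 1) (m + 1) ∪
      (fun l => (l.headD 0 + 1) :: l.tail) '' weakCompositions (q + 2) m := by
  ext l
  rcases l with _ | ⟨x, l⟩
  · simp [weakCompositions]
  constructor
  · rintro ⟨hlen, hsum⟩
    simp only [List.length_cons, List.sum_cons, Nat.add_right_cancel_iff] at hlen hsum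
    rcases x with _ | x
    · exact Or.inl ⟨l, ⟨hlen, by omega⟩, rfl⟩
    · exact Or.inr ⟨x :: l, ⟨by simpa using hlen, by simp; omega⟩, rfl⟩
  · rintro (⟨l', ⟨hlen, hsum⟩, h⟩ | ⟨_ | ⟨y, l'⟩, ⟨hlen, hsum⟩, h⟩)
    · obtain ⟨rfl, rfl⟩ := List.cons.inj h
      exact ⟨by simpa using hlen, by simpa using hsum⟩
    · simp at hlen
    · obtain ⟨rfl, rfl⟩ := List.cons.inj h
      simp only [List.length_cons, List.sum_cons] at hlen hsum
      exact ⟨by simpa using hlen, by simp; omega⟩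

lemma ncard_weakCompositions (q m : ℕ) : (weakCompositions (q + 1) m).ncard = (m + q).choose q := by
  induction q generalizing m with
  | zero =>
    have : weakCompositions 1 m = {[m]} := by
      ext (_ | ⟨x, _ | ⟨y, l⟩⟩) <;> simp [weakCompositions, eq_comm]
    simp [this]
  | succ q ihq =>
    induction m with
    | zero =>
      have : weakCompositions (q + 2) 0 = {List.replicate (q + 2) 0} := by
        ext l
        simp [weakCompositions, List.eq_replicate_iff, List.sum_eq_zero_iff]
      simp [this]
    | succ m ihm =>
      have hinj : Set.InjOn (fun l => (l.headD 0 + 1) :: l.tail) (weakCompositions (q + 2) m) := by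
        rintro (_ | ⟨x, l⟩) ⟨hlen, -⟩ (_ | ⟨y, l'⟩) ⟨hlen', -⟩ h
        · rfl
        · simp at hlen
        · simp at hlen'
        · simp only [List.headD_cons, List.tail_cons, List.cons.injEq,
            Nat.add_right_cancel_iff] at h
          rw [h.1, h.2]
      have hdisj : Disjoint (List.cons 0 '' weakCompositions (q + 1) (m + 1))
          ((fun l => (l.headD 0 + 1) :: l.tail) '' weakCompositions (q + 2) m) :=
        Set.disjoint_left.2 fun _ ⟨_, _, h₁⟩ ⟨_, _, h₂⟩ => by simp [← h₁] at h₂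
      rw [weakCompositions_add_two_succ, Set.ncard_union_eq hdisj
        ((finite_weakCompositions _ _).image _) ((finite_weakCompositions _ _).image _),
        List.cons_injective.injOn.ncard_image, hinj.ncard_image, ihq, ihm,
        show m + 1 + (q + 1) = m + q + 1 + 1 by ring, Nat.choose_succ_succ',
        show m + 1 + q = m + q + 1 by ring, show m + (q + 1) = m + q + 1 by ring]

end Counting

/-- `a` flats and `b` arches in a row, cut into `q` possibly empty slots. -/
def layerCount (q a b : ℕ) : ℕ := (b + a).choose a * (b + a + q - 1).choose (q - 1)

lemma ncard_shapes {q : ℕ} (hq : 0 < q) (a b : ℕ) : (Shapes q a b).ncard = layerCount q a b := by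
  obtain ⟨q, rfl⟩ : ∃ q', q = q' + 1 := ⟨q - 1, by omega⟩
  have himage :
      (fun ss : List (List Bool) => (ss.map List.length, ss.flatten)) '' Shapes (q + 1) a b =
        weakCompositions (q + 1) (a + b) ×ˢ boolWords (a + b) b := by
    ext ⟨ls, w⟩
    simp only [Set.mem_image, Set.mem_prod, Prod.mk.injEq, Shapes, weakCompositions, boolWords,
      Set.mem_ofPred_eq]
    constructor
    · rintro ⟨ss, ⟨hlen, ha, hb⟩, rfl, rfl⟩
      have := List.count_false_add_count_true ss.flatten
      exact ⟨⟨by simpa using hlen, by rw [← List.length_flatten]; omega⟩, by omega, hb⟩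
    · rintro ⟨⟨hls, hsum⟩, hlen, hb⟩
      have := List.count_false_add_count_true w
      have hflat := List.flatten_splitLengths w ls (by omega)
      refine ⟨ls.splitLengths w, ⟨by simpa using hls, ?_, ?_⟩,
        List.map_splitLengths_length w ls (by omega), hflat⟩ <;> rw [hflat] <;> omega
  have hinj : Set.InjOn (fun ss : List (List Bool) => (ss.map List.length, ss.flatten))
      (Shapes (q + 1) a b) := fun _ _ _ _ h =>
    List.eq_iff_flatten_eq.2 ⟨(Prod.mk.inj h).2, (Prod.mk.inj h).1⟩
  rw [← hinj.ncard_image, himage, Set.ncard_prod, ncard_weakCompositions, ncard_boolWords,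
    layerCount, add_comm b a, ← add_assoc, Nat.add_sub_cancel, Nat.add_sub_cancel, mul_comm,
    Nat.choose_symm_add]

lemma forest_of_eq_zero {f p : ℕ → ℕ} (hvan : ∀ i, f i = 0 ∧ p i = 0) : Forest f p = {[]} := by
  ext vs
  simp only [Forest, Set.mem_ofPred_eq, Set.mem_singleton_iff, (hvan _).1, (hvan _).2,
    List.length_eq_zero_iff]
  constructor
  · exact fun h => h.1
  · rintro rfl
    simp [pooledCount]

theorem ncard_forest (h : ℕ) {f p : ℕ → ℕ} (hp : ∀ i < h, 0 < p i)
    (hvan : ∀ i, h ≤ i → f i = 0 ∧ p i = 0) :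
    (Forest f p).ncard = ∏ i ∈ range h, layerCount (p i) (f i) (p (i + 1)) := by
  induction h generalizing f p with
  | zero => simp [forest_of_eq_zero fun i => hvan i (Nat.zero_le i)]
  | succ h ih =>
    rw [ncard_forest_eq_mul, ncard_shapes (hp 0 (Nat.succ_pos h)),
      ih (fun i hi => hp (i + 1) (by omega)) (fun i hi => hvan (i + 1) (by omega)),
      prod_range_succ', mul_comm]

lemma image_singleton_eq_forest {f p : ℕ → ℕ} (hp0 : p 0 = 0) :
    (fun l => [l]) ''
        {l | IsMotzkin l ∧ (∀ k : ℕ, levelCount H l k = f k) ∧ ∀ k : ℕ, levelCount U l k = p k} =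
      Forest f (Function.update p 0 1) := by
  ext vs
  constructor
  · rintro ⟨l, ⟨hl, hf, hp⟩, rfl⟩
    exact ⟨rfl, by simpa using hl, fun k => by simp [pooledCount, hf],
      fun k => by simpa [pooledCount] using hp (k + 1)⟩
  · rintro ⟨hlen, hvs, hf, hp⟩
    obtain ⟨l, rfl⟩ := List.length_eq_one_iff.1 (by simpa using hlen)
    have hl := hvs l (by simp)
    refine ⟨l, ⟨hl, fun k => by simpa [pooledCount] using hf k, fun k => ?_⟩, rfl⟩
    rcases k with _ | k
    · simpa [hp0] using levelCount_U_zero hl.1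
    · simpa [pooledCount] using hp k

lemma mcount_eq_prod {a : BSeq} (hp0 : a.p 0 = 0) (hph : a.p (a.h + 1) = 0) :
    mcount a = ∏ i ∈ range (a.h + 1),
      layerCount (Function.update a.p 0 1 i) (a.f i) (Function.update a.p 0 1 (i + 1)) := by
  obtain ⟨h, f, p⟩ := a
  simp only at hp0 hph ⊢
  rcases h with _ | h
  · simp [mcount, layerCount, hp0, hph]
  rw [prod_range_succ, prod_range_succ', mcount, ← Ico_add_one_right_eq_Icc,
    prod_Ico_eq_prod_range, Nat.add_sub_cancel, Nat.add_sub_cancel]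
  simp only [Function.update_self, Function.update_of_ne (Nat.add_one_ne_zero _), hph, layerCount,
    zero_add, Nat.choose_self, one_mul, Nat.sub_self, Nat.choose_zero_right, mul_one]
  have hmid : ∀ i ∈ range h, (p (1 + i + 1) + f (1 + i)).choose (f (1 + i)) *
      (p (1 + i + 1) + f (1 + i) + p (1 + i) - 1).choose (p (1 + i) - 1) =
      (p (i + 1 + 1) + f (i + 1)).choose (f (i + 1)) *
      (p (i + 1 + 1) + f (i + 1) + p (i + 1) - 1).choose (p (i + 1) - 1) := fun i _ => by
    rw [add_comm 1 i]
  rw [prod_congr rfl hmid]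
  ring

/-- for any building sequence `a ∈ S(n,A)`, the number of Motzkin paths of
width `n` and area `A` whose building sequence is `a` is exactly `m(a)`. -/
theorem motzkin_paths_with_building_sequence (n A : ℕ) (a : BSeq) (ha : a ∈ Sset n A) :
    {mz : List Move | mz.length = n ∧ IsMotzkin mz ∧ area mz = (A : ℤ) ∧
      hasBuildSeq mz a}.ncard = mcount a := by
  have hpaths := Set.ext (mem_sset_iff ha)
  obtain ⟨hpos, hp0, hph, hfh, -, -⟩ := ha
  rw [hpaths, ← List.singleton_injective.injOn.ncard_image, image_singleton_eq_forest hp0,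
    ncard_forest (a.h + 1) (fun i hi => ?_) (fun i hi => ?_),
    mcount_eq_prod hp0 (hph _ a.h.lt_succ_self)]
  · rcases Nat.eq_zero_or_pos i with rfl | hi0
    · simp
    · rw [Function.update_of_ne hi0.ne']
      exact hpos i hi0 (by omega)
  · rw [Function.update_of_ne (by omega)]
    exact ⟨hfh i (by omega), hph i (by omega)⟩
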